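/- arXiv:2011.05192 — 2 statements merged into one kernel-verified Lean document; each statement's English description precedes it below -/
import Mathlib

section
/- Integrating the stationary eigenvalue equation: if F : ℝ → ℝ is nonnegative, integrable, C¹ with F' integrable, F(z) → 0 as |z| → ∞, μF is integrable, and λF(z) − cF'(z) + μ(z)F(z) = β(K ⋆ F)(z) holds for all z with K a probability density (∫K = 1) and ∫F > 0, then λ = ∫ (β − μ(z)) F(z) dz / ∫ F(z) dz. -/
open MeasureTheory Real Filter Convolution

/-! Integrate the equation over `ℝ`: the transport term `c F'` integrates to zero because `F` is
integrable with integrable derivative, and the birth term integrates to `β ∫ F` because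
`∫ (K ⋆ F) = (∫ K) (∫ F) = ∫ F`. What remains is `λ ∫ F + ∫ μ F = β ∫ F`. -/

theorem integral_integral_comp_sub_mul {G : Type*} [AddGroup G] [MeasurableSpace G]
    [MeasurableAdd₂ G] [MeasurableNeg G] {μ : Measure G} [SFinite μ] [μ.IsAddRightInvariant]
    {K F : G → ℝ} (hK : Integrable K μ) (hF : Integrable F μ) :
    ∫ z, ∫ t, K (z - t) * F t ∂μ ∂μ = (∫ z, K z ∂μ) * ∫ z, F z ∂μ := by
  have hconv : ∀ z, ∫ t, K (z - t) * F t ∂μ = (F ⋆[ContinuousLinearMap.mul ℝ ℝ, μ] K) z :=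
    fun z => by simp only [convolution_def, ContinuousLinearMap.mul_apply', mul_comm]
  simp_rw [hconv]
  rw [integral_convolution _ hF hK, ContinuousLinearMap.mul_apply', mul_comm]

theorem stmt_2_general (K μ F : ℝ → ℝ) (β c lam : ℝ)
    (hKint : Integrable K) (hK1 : (∫ y, K y) = 1)
    (hFint : Integrable F)
    (hFdiff : Differentiable ℝ F) (hF'int : Integrable (deriv F))
    (hμF : Integrable (fun z => μ z * F z))
    (hFpos : 0 < ∫ z, F z)
    (hstat : ∀ z, lam * F z - c * deriv F z + μ z * F z = β * ∫ t, K (z - t) * F t) :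
    lam = (∫ z, (β - μ z) * F z) / ∫ z, F z := by
  have hderiv : ∫ z, deriv F z = 0 :=
    integral_eq_zero_of_hasDerivAt_of_integrable (fun x => (hFdiff x).hasDerivAt) hF'int hFint
  have hlinear : Integrable (fun z => lam * F z - c * deriv F z) :=
    (hFint.const_mul lam).sub (hF'int.const_mul c)
  have hbalance := integral_congr_ae (ae_of_all volume hstat)
  rw [integral_add hlinear hμF,
    integral_sub (hFint.const_mul lam) (hF'int.const_mul c), integral_const_mul,
    integral_const_mul, hderiv, integral_const_mul, integral_integral_comp_sub_mul hKint hFint,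
    hK1] at hbalance
  have hnum : ∫ z, (β - μ z) * F z = β * (∫ z, F z) - ∫ z, μ z * F z := by
    simp only [sub_mul]
    rw [integral_sub (hFint.const_mul β) hμF, integral_const_mul]
  rw [hnum, eq_div_iff hFpos.ne']
  linarith

/-- integrating the stationary eigenvalue equation yields
`λ = ∫ (β − μ) F / ∫ F`. -/
theorem stmt_2 (K μ F : ℝ → ℝ) (β c lam : ℝ)
    (hK0 : ∀ y, 0 ≤ K y) (hKint : Integrable K) (hK1 : (∫ y, K y) = 1)
    (hμ : Continuous μ)
    (hF0 : ∀ z, 0 ≤ F z) (hFint : Integrable F)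
    (hFdiff : Differentiable ℝ F) (hF'int : Integrable (deriv F))
    (hFlim : Tendsto F (cocompact ℝ) (nhds 0))
    (hμF : Integrable (fun z => μ z * F z))
    (hFpos : 0 < ∫ z, F z)
    (hstat : ∀ z, lam * F z - c * deriv F z + μ z * F z = β * ∫ t, K (z - t) * F t) :
    lam = (∫ z, (β - μ z) * F z) / ∫ z, F z :=
  stmt_2_general K μ F β c lam hKint hK1 hFint hFdiff hF'int hμF hFpos hstat
end

section
/- The Gaussian function F(z) = (λ/√(2πσ√β)) exp(−(1/(2σ√β))(z + c/(σ√β))²), with λ = β − c²/(2βσ²) − σ√β/2, satisfies the equation λF(z) − cF'(z) + (z²/2)F(z) = βF(z) + (βσ²/2)F''(z) for all z ∈ ℝ. -/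
open Real

lemma gauss_hasDerivAt (K a b : ℝ) (z : ℝ) :
    HasDerivAt (fun z => K * Real.exp (-a * (z + b) ^ 2))
      (K * Real.exp (-a * (z + b) ^ 2) * (-a * (2 * (z + b)))) z := by
  have h1 : HasDerivAt (fun z : ℝ => -a * (z + b) ^ 2) (-a * (2 * (z + b))) z := by
    have h0 : HasDerivAt (fun z : ℝ => z + b) 1 z := (hasDerivAt_id z).add_const b
    have := (h0.pow 2).const_mul (-a)
    simpa [mul_comm, mul_assoc, mul_left_comm] using this
  have := (h1.exp).const_mul K
  rw [mul_assoc]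
  exact this

/-- the explicit Gaussian profile solves the quadratic-selection
diffusive stationary equation. -/
theorem stmt_6 (β σ c : ℝ) (hβ : 0 < β) (hσ : 0 < σ) :
    let lam : ℝ := β - c ^ 2 / (2 * β * σ ^ 2) - σ * Real.sqrt β / 2
    let F : ℝ → ℝ := fun z =>
      (lam / Real.sqrt (2 * Real.pi * σ * Real.sqrt β)) *
        Real.exp (-(1 / (2 * σ * Real.sqrt β)) * (z + c / (σ * Real.sqrt β)) ^ 2)
    ∀ z : ℝ, lam * F z - c * deriv F z + (z ^ 2 / 2) * F z
        = β * F z + (β * σ ^ 2 / 2) * deriv (deriv F) z := by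
  intro lam F z
  have hs : 0 < Real.sqrt β := Real.sqrt_pos.mpr hβ
  set s : ℝ := Real.sqrt β with hsdef
  have hs2 : s ^ 2 = β := Real.sq_sqrt hβ.le
  set a : ℝ := 1 / (2 * σ * s) with ha
  set b : ℝ := c / (σ * s) with hb
  set K : ℝ := lam / Real.sqrt (2 * Real.pi * σ * s) with hK
  have hFeq : F = fun z => K * Real.exp (-a * (z + b) ^ 2) := by
    rfl
  have hderiv : deriv F = fun z =>
      (K * Real.exp (-a * (z + b) ^ 2)) * (-a * (2 * (z + b))) := by
    funext w
    rw [hFeq]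
    exact (gauss_hasDerivAt K a b w).deriv
  have hderiv2 : deriv (deriv F) z =
      (K * Real.exp (-a * (z + b) ^ 2)) * (-a * (2 * (z + b))) * (-a * (2 * (z + b)))
        + (K * Real.exp (-a * (z + b) ^ 2)) * (-a * 2) := by
    rw [hderiv]
    have hh : HasDerivAt (fun z : ℝ => -a * (2 * (z + b))) (-a * 2) z := by
      have h0 : HasDerivAt (fun z : ℝ => z + b) 1 z := (hasDerivAt_id z).add_const b
      have := (h0.const_mul 2).const_mul (-a)
      simpa using this
    exact ((gauss_hasDerivAt K a b z).mul hh).deriv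
  set E : ℝ := K * Real.exp (-a * (z + b) ^ 2) with hE
  have hFz : F z = E := by rw [hFeq]
  have hF'z : deriv F z = E * (-a * (2 * (z + b))) := by rw [hderiv]
  rw [hFz, hF'z, hderiv2]
  have hσs : σ * s ≠ 0 := by positivity
  have hβ' : β ≠ 0 := hβ.ne'
  -- reduce to algebraic identity
  have key : lam - c * (-a * (2 * (z + b))) + z ^ 2 / 2
      = β + β * σ ^ 2 / 2 * ((-a * (2 * (z + b))) * (-a * (2 * (z + b))) + (-a * 2)) := by
    simp only [lam, ha, hb, ← hs2]
    have hσ' : σ ≠ 0 := hσ.ne'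
    have hs' : s ≠ 0 := hs.ne'
    field_simp
    rw [Real.sqrt_sq hs.le]
    ring
  linear_combination E * key
end
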